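/- Let S be a semigroup, let K be a finite subset of S, and let 0 < ε < 1. Suppose (A_j)_{j∈J} is a finite nonempty ε-disjoint family of nonempty finite subsets of S. Then α(⋃_{j∈J} A_j, K) ≤ (1/(1−ε)) · max_{j∈J} α(A_j, K). -/

import Mathlib

/-- A family `(A j)_{j ∈ J}` of finite subsets of `X` is `ε`-disjoint if there is a family
`(B j)_{j ∈ J}` of pairwise disjoint subsets of `X` with `B j ⊆ A j` and
`|B j| ≥ (1 - ε) |A j|` for all `j`. -/
def EpsDisjoint {X : Type*} (ε : ℝ) {J : Type*} (A : J → Finset X) : Prop :=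
  ∃ B : J → Finset X,
    Pairwise (fun i j => Disjoint (B i) (B j)) ∧
    ∀ j, B j ⊆ A j ∧ (1 - ε) * ((A j).card : ℝ) ≤ ((B j).card : ℝ)

/-- The right `K`-boundary of a finite subset `A` of a semigroup:
`∂_K(A) = A \ int_K(A) = {s ∈ A : ¬(Ks ⊆ A)}`. -/
def finBoundary {S : Type*} [Mul S] [DecidableEq S] (K A : Finset S) : Finset S :=
  A.filter fun s => ¬ ∀ k ∈ K, k * s ∈ A

/-- The amenability constant of `A` with respect to `K`: `α(A, K) = |∂_K(A)| / |A|`. -/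
noncomputable def amenConst {S : Type*} [Mul S] [DecidableEq S] (A K : Finset S) : ℝ :=
  ((finBoundary K A).card : ℝ) / (A.card : ℝ)

open Finset

section Boundary

variable {S : Type*} [Mul S] [DecidableEq S]

theorem finBoundary_biUnion_subset {J : Type*} (K : Finset S) (s : Finset J) (A : J → Finset S) :
    finBoundary K (s.biUnion A) ⊆ s.biUnion fun j => finBoundary K (A j) := by
  intro x hx
  simp only [finBoundary, mem_filter, mem_biUnion] at hx ⊢
  obtain ⟨⟨j, hj, hxj⟩, hnot⟩ := hx
  exact ⟨j, hj, hxj, fun h => hnot fun k hk => ⟨j, hj, h k hk⟩⟩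

theorem card_finBoundary_biUnion_le {J : Type*} (K : Finset S) (s : Finset J)
    (A : J → Finset S) :
    #(finBoundary K (s.biUnion A)) ≤ ∑ j ∈ s, #(finBoundary K (A j)) :=
  (card_le_card (finBoundary_biUnion_subset K s A)).trans card_biUnion_le

theorem amenConst_nonneg (A K : Finset S) : 0 ≤ amenConst A K := by
  unfold amenConst
  positivity

/-- No junk value intervenes: for `A = ∅` both sides vanish. -/
theorem amenConst_mul_card (A K : Finset S) :
    amenConst A K * #A = #(finBoundary K A) := by
  rcases A.eq_empty_or_nonempty with rfl | hA
  · simp [finBoundary]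
  · exact div_mul_cancel₀ _ (by exact_mod_cast hA.card_pos.ne')

theorem amenConst_le_of_card_finBoundary_le {A K : Finset S} {c : ℝ} (hc : 0 ≤ c)
    (h : (#(finBoundary K A) : ℝ) ≤ c * #A) : amenConst A K ≤ c :=
  div_le_of_le_mul₀ (Nat.cast_nonneg _) hc h

end Boundary

theorem EpsDisjoint.sum_card_le_card_biUnion {X J : Type*} [DecidableEq X] {ε : ℝ}
    {A : J → Finset X} (hd : EpsDisjoint ε A) (s : Finset J) :
    (1 - ε) * ∑ j ∈ s, (#(A j) : ℝ) ≤ #(s.biUnion A) := by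
  obtain ⟨B, hB_disj, hB⟩ := hd
  calc (1 - ε) * ∑ j ∈ s, (#(A j) : ℝ)
      ≤ ∑ j ∈ s, (#(B j) : ℝ) := by
        rw [mul_sum]
        exact sum_le_sum fun j _ => (hB j).2
    _ = #(s.biUnion B) := by
        rw [card_biUnion fun i _ j _ hij => hB_disj hij]
        push_cast
        rfl
    _ ≤ #(s.biUnion A) := by
        exact_mod_cast card_le_card (biUnion_mono fun j _ => (hB j).1)

theorem amenConst_biUnion_le_general {S : Type*} [Semigroup S] [DecidableEq S]
    {J : Type*} [Fintype J] [Nonempty J]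
    (K : Finset S) (ε : ℝ) (hε₁ : ε < 1)
    (A : J → Finset S) (hd : EpsDisjoint ε A) :
    amenConst (Finset.univ.biUnion A) K ≤
      (1 / (1 - ε)) * Finset.univ.sup' Finset.univ_nonempty (fun j => amenConst (A j) K) := by
  have hε : 0 < 1 - ε := sub_pos.mpr hε₁
  set M := univ.sup' univ_nonempty fun j => amenConst (A j) K
  have hle_M : ∀ j, amenConst (A j) K ≤ M := fun j => le_sup' (fun j => amenConst (A j) K) (mem_univ j)
  have hM : 0 ≤ M := (amenConst_nonneg _ _).trans (hle_M (Classical.arbitrary J))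
  refine amenConst_le_of_card_finBoundary_le (by positivity) ?_
  calc (#(finBoundary K (univ.biUnion A)) : ℝ)
      ≤ ∑ j, (#(finBoundary K (A j)) : ℝ) := by
        exact_mod_cast card_finBoundary_biUnion_le K univ A
    _ = ∑ j, amenConst (A j) K * #(A j) := by simp only [amenConst_mul_card]
    _ ≤ ∑ j, M * #(A j) := by gcongr with j; exact hle_M j
    _ = M / (1 - ε) * ((1 - ε) * ∑ j, (#(A j) : ℝ)) := by
        rw [← mul_sum]; field_simp
    _ ≤ M / (1 - ε) * #(univ.biUnion A) := by
        gcongr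
        exact hd.sum_card_le_card_biUnion univ
    _ = 1 / (1 - ε) * M * #(univ.biUnion A) := by ring

/-- Lemma 3.3: if `(A j)_{j ∈ J}` is a finite nonempty `ε`-disjoint family of nonempty finite
subsets of a semigroup `S` (with `0 < ε < 1`) and `K ⊆ S` is finite, then
`α(⋃_j A j, K) ≤ (1 / (1 - ε)) · max_j α(A j, K)`. -/
theorem amenConst_biUnion_le {S : Type*} [Semigroup S] [DecidableEq S]
    {J : Type*} [Fintype J] [Nonempty J] [DecidableEq J]
    (K : Finset S) (ε : ℝ) (hε₀ : 0 < ε) (hε₁ : ε < 1)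
    (A : J → Finset S) (hA : ∀ j, (A j).Nonempty) (hd : EpsDisjoint ε A) :
    amenConst (Finset.univ.biUnion A) K ≤
      (1 / (1 - ε)) * Finset.univ.sup' Finset.univ_nonempty (fun j => amenConst (A j) K) :=
  amenConst_biUnion_le_general K ε hε₁ A hd
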